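/- Let Ê_X and Ê_Y be the double-centered squared Euclidean distance matrices of the rows of X ∈ ℝ^{n×d} and Y ∈ ℝ^{n×m}. Then Σ_{k,l} [Ê_X]_{kl}[Ê_Y]_{kl} = 4 Tr(X̃ᵀ X̃ Ỹᵀ Ỹ) ≥ 0, where X̃ = JX and Ỹ = JY; hence the sample distance covariance ν̂²(X,Y) (for α = 2) is nonnegative. -/
import Mathlib


open Matrix BigOperators

noncomputable def centering (n : ℕ) : Matrix (Fin n) (Fin n) ℝ :=
  1 - (n : ℝ)⁻¹ • Matrix.of (fun _ _ => (1 : ℝ))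

def sqDist {n d : ℕ} (X : Matrix (Fin n) (Fin d) ℝ) : Matrix (Fin n) (Fin n) ℝ :=
  Matrix.of (fun k l => ∑ j, (X k j - X l j) ^ 2)

lemma centering_rowsum {n : ℕ} (hn : 0 < n) (k : Fin n) :
    ∑ j, centering n k j = 0 := by
  have hc : (n : ℝ) ≠ 0 := by exact_mod_cast hn.ne'
  simp only [centering, Matrix.sub_apply, Matrix.smul_apply, Matrix.of_apply,
    Matrix.one_apply, smul_eq_mul, mul_one, Finset.sum_sub_distrib]
  rw [Finset.sum_ite_eq (Finset.univ) k (fun _ => (1:ℝ))]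
  simp [Finset.mem_univ, mul_inv_cancel₀ hc]

lemma centering_symm (n : ℕ) : (centering n)ᵀ = centering n := by
  ext i j
  simp [centering, Matrix.one_apply, eq_comm]

lemma centering_colsum {n : ℕ} (hn : 0 < n) (l : Fin n) :
    ∑ j, centering n j l = 0 := by
  have := centering_rowsum hn l
  simpa [centering, Matrix.one_apply, eq_comm] using this

lemma centering_sqDist_centering {n d : ℕ} (hn : 0 < n) (X : Matrix (Fin n) (Fin d) ℝ) :
    centering n * sqDist X * centering n
      = (-2 : ℝ) • ((centering n * X) * (centering n * X)ᵀ) := by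
  set f : Fin n → ℝ := fun k => ∑ j, X k j ^ 2 with hf
  have hD : sqDist X = Matrix.of (fun k _ => f k) + Matrix.of (fun _ l => f l)
      + (-2 : ℝ) • (X * Xᵀ) := by
    ext k l
    simp only [sqDist, Matrix.of_apply, Matrix.add_apply, Matrix.smul_apply,
      Matrix.mul_apply, Matrix.transpose_apply, smul_eq_mul, hf]
    rw [← Finset.sum_add_distrib, Finset.mul_sum, ← Finset.sum_add_distrib]
    congr 1; ext j; ring
  have hJB : centering n * Matrix.of (fun _ l => f l) = 0 := by
    ext k l
    simp only [Matrix.mul_apply, Matrix.of_apply, Matrix.zero_apply]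
    rw [← Finset.sum_mul, centering_rowsum hn k, zero_mul]
  have hAJ : Matrix.of (fun k _ => f k) * centering n = 0 := by
    ext k l
    simp only [Matrix.mul_apply, Matrix.of_apply, Matrix.zero_apply]
    rw [← Finset.mul_sum, centering_colsum hn l, mul_zero]
  calc centering n * sqDist X * centering n
      = (centering n * Matrix.of (fun k _ => f k)) * centering n
        + (centering n * Matrix.of (fun _ l => f l)) * centering n
        + (-2 : ℝ) • (centering n * (X * Xᵀ) * centering n) := by
        rw [hD]; simp only [Matrix.mul_add, Matrix.add_mul, Matrix.mul_smul,
          Matrix.smul_mul]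
    _ = (-2 : ℝ) • ((centering n * X) * (centering n * X)ᵀ) := by
        rw [hJB, Matrix.zero_mul, mul_assoc (centering n) _ (centering n), hAJ,
          Matrix.mul_zero]
        rw [Matrix.transpose_mul, centering_symm]
        simp only [zero_add, add_zero]
        congr 1
        simp only [← Matrix.mul_assoc]

lemma trace_aux {n d m : ℕ} (A : Matrix (Fin n) (Fin d) ℝ)
    (B : Matrix (Fin n) (Fin m) ℝ) : 0 ≤ ((A * Aᵀ) * (B * Bᵀ)).trace := by
  have e1 : ((A * Aᵀ) * (B * Bᵀ)).trace = (A * (Aᵀ * (B * Bᵀ))).trace := by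
    simp only [Matrix.mul_assoc]
  rw [e1, Matrix.trace_mul_comm]
  have e2 : Aᵀ * (B * Bᵀ) * A = (Bᵀ * A)ᵀ * (Bᵀ * A) := by
    rw [Matrix.transpose_mul, Matrix.transpose_transpose]
    simp only [← Matrix.mul_assoc]
  rw [e2]
  simp only [Matrix.trace, Matrix.diag, Matrix.mul_apply, Matrix.transpose_apply]
  exact Finset.sum_nonneg fun i _ => Finset.sum_nonneg fun j _ => mul_self_nonneg _

/-- Σ_{k,l}[Ê_X]_{kl}[Ê_Y]_{kl} = 4 Tr(X̃X̃ᵀỸỸᵀ) ≥ 0, so ν̂²(X,Y) ≥ 0. -/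
theorem stmt19 {n d m : ℕ} (hn : 0 < n)
    (X : Matrix (Fin n) (Fin d) ℝ) (Y : Matrix (Fin n) (Fin m) ℝ) :
    let J := centering n
    let EX := J * sqDist X * J
    let EY := J * sqDist Y * J
    let Xc := J * X
    let Yc := J * Y
    (∑ k, ∑ l, EX k l * EY k l) = 4 * ((Xc * Xcᵀ) * (Yc * Ycᵀ)).trace
    ∧ 0 ≤ (1 / (n : ℝ) ^ 2) * ∑ k, ∑ l, EX k l * EY k l := by
  intro J EX EY Xc Yc
  have hEX : EX = (-2 : ℝ) • (Xc * Xcᵀ) := centering_sqDist_centering hn X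
  have hEY : EY = (-2 : ℝ) • (Yc * Ycᵀ) := centering_sqDist_centering hn Y
  have hQ : ∀ k l : Fin n, (∑ j, Yc l j * Ycᵀ j k) = ∑ j, Yc k j * Ycᵀ j l := by
    intro k l
    simp only [Matrix.transpose_apply]
    exact Finset.sum_congr rfl fun j _ => mul_comm _ _
  have hmain : (∑ k, ∑ l, EX k l * EY k l)
      = 4 * ((Xc * Xcᵀ) * (Yc * Ycᵀ)).trace := by
    rw [hEX, hEY]
    simp only [Matrix.smul_apply, smul_eq_mul, Matrix.trace, Matrix.diag,
      Matrix.mul_apply]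
    rw [Finset.mul_sum]
    refine Finset.sum_congr rfl (fun k _ => ?_)
    rw [Finset.mul_sum]
    refine Finset.sum_congr rfl (fun l _ => ?_)
    rw [hQ k l]; ring
  refine ⟨hmain, ?_⟩
  rw [hmain]
  have := trace_aux Xc Yc
  positivity
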